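/- arXiv:1512.05798 — 2 statements merged into one kernel-verified Lean document; each statement's English description precedes it below -/
import Mathlib

section
/- The inequality (1−p)·(sinh x)/x + p·(tanh x)/x > 1 holds for all x > 0 if and only if p ≤ 1/3, and the inequality 1 > (1−q)·(sinh x)/x + q·(tanh x)/x holds for all x > 0 if and only if q ≥ 1. -/
/-!
Put `F_p(x) = (1 - p) sinh x + p tanh x - x`, so that both inequalities compare `F_p(x)` with `0`.
Writing `c = cosh x`, one has `F_p(0) = 0` and
`F_p'(x) = (c - 1) ((1 - p) c² - p c - p) / c²`, so the sign of `F_p` near `0⁺` is governed by the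
quadratic factor. At `c = 1` the factor equals `1 - 3p`: it is positive for all `c > 1` when
`p ≤ 1/3` and negative for `c` close to `1` when `p > 1/3`; it is negative for all `c > 0` when
`q ≥ 1`. Finally, for `q < 1` the exponential growth of `(1 - q) sinh x` makes `F_q` positive
for large `x`.
-/

open Real Set Topology

theorem Real.hasDerivAt_tanh (x : ℝ) : HasDerivAt tanh (1 / cosh x ^ 2) x := by
  have hc := (cosh_pos x).ne'
  have h := (hasDerivAt_sinh x).div (hasDerivAt_cosh x) hc
  rw [show sinh / cosh = tanh from funext fun y => (tanh_eq_sinh_div_cosh y).symm] at h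
  refine h.congr_deriv ?_
  rw [← cosh_sq_sub_sinh_sq x]
  ring

noncomputable def huygensGap (p x : ℝ) : ℝ := (1 - p) * sinh x + p * tanh x - x

def huygensFactor (p c : ℝ) : ℝ := (1 - p) * c ^ 2 - p * c - p

theorem huygensGap_zero (p : ℝ) : huygensGap p 0 = 0 := by
  simp [huygensGap]

theorem hasDerivAt_huygensGap (p x : ℝ) :
    HasDerivAt (huygensGap p) ((cosh x - 1) * huygensFactor p (cosh x) / cosh x ^ 2) x := by
  have h := (((hasDerivAt_sinh x).const_mul (1 - p)).add
    ((Real.hasDerivAt_tanh x).const_mul p)).sub (hasDerivAt_id x)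
  refine h.congr_deriv ?_
  have hc := (cosh_pos x).ne'
  unfold huygensFactor
  field_simp
  ring

theorem continuous_huygensGap (p : ℝ) : Continuous (huygensGap p) :=
  continuous_iff_continuousAt.2 fun x => (hasDerivAt_huygensGap p x).continuousAt

theorem huygensGap_pos {p a : ℝ} (ha : 0 < a)
    (h : ∀ x ∈ Ioo 0 a, 0 < huygensFactor p (cosh x)) : 0 < huygensGap p a := by
  have hmono : StrictMonoOn (huygensGap p) (Icc 0 a) := by
    refine strictMonoOn_of_deriv_pos (convex_Icc 0 a) (continuous_huygensGap p).continuousOn ?_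
    intro x hx
    rw [interior_Icc] at hx
    rw [(hasDerivAt_huygensGap p x).deriv]
    have hc : 1 < cosh x := one_lt_cosh.2 hx.1.ne'
    exact div_pos (mul_pos (sub_pos.2 hc) (h x hx)) (by positivity)
  simpa [huygensGap_zero] using
    hmono (left_mem_Icc.2 ha.le) (right_mem_Icc.2 ha.le) ha

theorem huygensGap_neg {p a : ℝ} (ha : 0 < a)
    (h : ∀ x ∈ Ioo 0 a, huygensFactor p (cosh x) < 0) : huygensGap p a < 0 := by
  have hanti : StrictAntiOn (huygensGap p) (Icc 0 a) := by
    refine strictAntiOn_of_deriv_neg (convex_Icc 0 a) (continuous_huygensGap p).continuousOn ?_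
    intro x hx
    rw [interior_Icc] at hx
    rw [(hasDerivAt_huygensGap p x).deriv]
    have hc : 1 < cosh x := one_lt_cosh.2 hx.1.ne'
    exact div_neg_of_neg_of_pos (mul_neg_of_pos_of_neg (sub_pos.2 hc) (h x hx)) (by positivity)
  simpa [huygensGap_zero] using
    hanti (left_mem_Icc.2 ha.le) (right_mem_Icc.2 ha.le) ha

theorem huygensFactor_pos {p c : ℝ} (hp : p ≤ 1 / 3) (hc : 1 < c) : 0 < huygensFactor p c := by
  unfold huygensFactor
  nlinarith

theorem huygensFactor_neg {q c : ℝ} (hq : 1 ≤ q) (hc : 0 < c) : huygensFactor q c < 0 := by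
  unfold huygensFactor
  nlinarith

theorem exists_huygensFactor_neg {p : ℝ} (hp : 1 / 3 < p) :
    ∃ a > 0, ∀ x ∈ Ioo 0 a, huygensFactor p (cosh x) < 0 := by
  have hcont : Continuous fun x => huygensFactor p (cosh x) := by
    unfold huygensFactor
    fun_prop
  have h0 : huygensFactor p (cosh 0) < 0 := by
    simp only [huygensFactor, cosh_zero]
    linarith
  have hev : ∀ᶠ x in 𝓝[>] 0, huygensFactor p (cosh x) < 0 :=
    nhdsWithin_le_nhds (hcont.continuousAt.eventually_lt continuousAt_const h0)
  exact mem_nhdsGT_iff_exists_Ioo_subset.1 hev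

theorem exists_huygensGap_pos {q : ℝ} (hq : q < 1) : ∃ x > 0, 0 < huygensGap q x := by
  have hq' : 0 < 1 - q := sub_pos.2 hq
  -- chosen so that `(1 - q) x² / 4 > (1 + |q|) x ≥ x + |q|`
  set x := 1 + 4 * (1 + |q|) / (1 - q) with hx
  have hx1 : 1 ≤ x := by
    have : 0 ≤ 4 * (1 + |q|) / (1 - q) := by positivity
    linarith
  have hsinh : x / 2 + x ^ 2 / 4 ≤ sinh x := by
    have := quadratic_le_exp_of_nonneg (by linarith : (0 : ℝ) ≤ x)
    have := exp_le_one_iff.2 (by linarith : -x ≤ 0)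
    rw [sinh_eq]
    linarith
  have htanh : -|q| ≤ q * tanh x := by
    refine neg_le_of_abs_le ?_
    rw [abs_mul]
    exact mul_le_of_le_one_right (abs_nonneg q) (abs_tanh_lt_one x).le
  have hx_mul : (1 - q) * x = (1 - q) + 4 * (1 + |q|) := by
    rw [hx]
    field_simp
  refine ⟨x, by linarith, ?_⟩
  unfold huygensGap
  nlinarith [mul_le_mul_of_nonneg_left hsinh hq'.le, abs_nonneg q]

theorem one_lt_div_iff_huygensGap_pos {p x : ℝ} (hx : 0 < x) :
    (1 - p) * sinh x / x + p * tanh x / x > 1 ↔ 0 < huygensGap p x := by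
  rw [gt_iff_lt, ← add_div, one_lt_div hx, huygensGap, sub_pos]

theorem div_lt_one_iff_huygensGap_neg {q x : ℝ} (hx : 0 < x) :
    1 > (1 - q) * sinh x / x + q * tanh x / x ↔ huygensGap q x < 0 := by
  rw [gt_iff_lt, ← add_div, div_lt_one hx, huygensGap, sub_neg]

theorem huygens_type_hyperbolic (p q : ℝ) :
    ((∀ x : ℝ, 0 < x →
      (1 - p) * Real.sinh x / x + p * Real.tanh x / x > 1) ↔ p ≤ 1 / 3) ∧
    ((∀ x : ℝ, 0 < x →
      1 > (1 - q) * Real.sinh x / x + q * Real.tanh x / x) ↔ q ≥ 1) := by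
  refine ⟨⟨fun h => ?_, fun hp x hx => ?_⟩, ⟨fun h => ?_, fun hq x hx => ?_⟩⟩
  · by_contra! hp
    obtain ⟨a, ha, hneg⟩ := exists_huygensFactor_neg hp
    exact (huygensGap_neg ha hneg).not_gt ((one_lt_div_iff_huygensGap_pos ha).1 (h a ha))
  · exact (one_lt_div_iff_huygensGap_pos hx).2 <|
      huygensGap_pos hx fun y hy => huygensFactor_pos hp (one_lt_cosh.2 hy.1.ne')
  · by_contra! hq
    obtain ⟨x, hx, hpos⟩ := exists_huygensGap_pos hq
    exact hpos.not_gt ((div_lt_one_iff_huygensGap_neg hx).1 (h x hx))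
  · exact (div_lt_one_iff_huygensGap_neg hx).2 <|
      huygensGap_neg hx fun y _ => huygensFactor_neg hq (cosh_pos y)
end

section
/- Let ν > −1. The inequalities (1−p)/ℐ_{ν+1}(x) + p·ℐ_ν(x)/ℐ_{ν+1}(x) > 1 > (1−q)/ℐ_{ν+1}(x) + q·ℐ_ν(x)/ℐ_{ν+1}(x) hold for all x in (0, ∞) if and only if p ≥ (ν+1)/(ν+2) and q ≤ 0. -/
/-! Put `y = x² / 4`. Then `ℐ_ν(x) - 1 = y ∑ aₙ yⁿ` and `ℐ_{ν+1}(x) - 1 = y ∑ aₙ wₙ yⁿ`, where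
`aₙ > 0` and the weights `wₙ = (ν+1)/(ν+n+2)` decrease strictly to `0`. Both inequalities together
say `q < R(y) < p` for the ratio `R = (ℐ_{ν+1} - 1)/(ℐ_ν - 1)`, which is the mean of the `wₙ` under
the probability weights proportional to `aₙ yⁿ`. Hence `0 < R < w₀ = (ν+1)/(ν+2)`, and these
bounds are sharp: the mass concentrates on `n = 0` as `y → 0` and escapes to infinity as `y → ∞`. -/

/-- The normalized modified Bessel function of the first kind,
`ℐ_ν(x) = 2^ν Γ(ν+1) x^{-ν} I_ν(x) = ∑ (1/4)^n x^(2n) / ((ν+1)_n n!)`. -/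
noncomputable def besselIn (ν x : ℝ) : ℝ :=
  ∑' n : ℕ, ((1 / 4 : ℝ) ^ n * x ^ (2 * n)) * Real.Gamma (ν + 1) /
    (Real.Gamma (ν + n + 1) * n.factorial)

open Filter Topology Asymptotics

theorem tendsto_tsum_mul_pow_nhds_zero {b : ℕ → ℝ} (hb : Summable fun n => ‖b n‖) :
    Tendsto (fun y : ℝ => ∑' n, b n * y ^ n) (𝓝 0) (𝓝 (b 0)) := by
  have h := tendsto_tsum_of_dominated_convergence (g := fun n => b n * 0 ^ n) hb
    (fun n => ((continuous_pow n).tendsto 0).const_mul (b n)) ?_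
  · rwa [tsum_eq_single 0 fun n hn => by simp [zero_pow hn], pow_zero, mul_one] at h
  filter_upwards [Icc_mem_nhds neg_one_lt_zero one_pos] with y hy n
  rw [norm_mul, norm_pow]
  exact mul_le_of_le_one_right (norm_nonneg _) (pow_le_one₀ (norm_nonneg _) (abs_le.2 hy))

/-- The mean of `w` under the probability weights `n ↦ a n * y ^ n / ∑' m, a m * y ^ m`. -/
noncomputable def seriesMean (a w : ℕ → ℝ) (y : ℝ) : ℝ :=
  (∑' n, a n * w n * y ^ n) / ∑' n, a n * y ^ n

section SeriesMean

variable {a w : ℕ → ℝ}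

theorem summable_mul_mul_pow (ha : ∀ n, 0 < a n) (hw : ∀ n, 0 < w n) (hanti : Antitone w)
    {y : ℝ} (hy : 0 < y) (hs : Summable fun n => a n * y ^ n) :
    Summable fun n => a n * w n * y ^ n :=
  (hs.mul_left (w 0)).of_nonneg_of_le (fun n => by have := ha n; have := hw n; positivity)
    fun n => by
      have := mul_le_mul_of_nonneg_left (hanti (Nat.zero_le n)) (mul_pos (ha n) (pow_pos hy n)).le
      linarith

theorem seriesMean_pos (ha : ∀ n, 0 < a n) (hw : ∀ n, 0 < w n) (hanti : Antitone w)
    {y : ℝ} (hy : 0 < y) (hs : Summable fun n => a n * y ^ n) : 0 < seriesMean a w y :=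
  div_pos
    ((summable_mul_mul_pow ha hw hanti hy hs).tsum_pos
      (fun n => by have := ha n; have := hw n; positivity) 0 (by simp [ha 0, hw 0]))
    (hs.tsum_pos (fun n => by have := ha n; positivity) 0 (by simp [ha 0]))

theorem seriesMean_lt (ha : ∀ n, 0 < a n) (hw : ∀ n, 0 < w n) (hanti : StrictAnti w)
    {y : ℝ} (hy : 0 < y) (hs : Summable fun n => a n * y ^ n) : seriesMean a w y < w 0 := by
  have hS : 0 < ∑' n, a n * y ^ n :=
    hs.tsum_pos (fun n => by have := ha n; positivity) 0 (by simp [ha 0])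
  rw [seriesMean, div_lt_iff₀ hS, ← tsum_mul_left]
  refine (summable_mul_mul_pow ha hw hanti.antitone hy hs).tsum_lt_tsum (i := 1) (fun n => ?_) ?_
    (hs.mul_left _)
  · have := mul_le_mul_of_nonneg_left (hanti.antitone (Nat.zero_le n))
      (mul_pos (ha n) (pow_pos hy n)).le
    linarith
  · have := mul_lt_mul_of_pos_left (hanti zero_lt_one) (mul_pos (ha 1) (pow_pos hy 1))
    linarith

theorem tendsto_seriesMean_nhdsGT_zero (ha : ∀ n, 0 < a n) (hw : ∀ n, 0 < w n)
    (hanti : Antitone w) (hs : ∀ y, 0 < y → Summable fun n => a n * y ^ n) :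
    Tendsto (seriesMean a w) (𝓝[>] 0) (𝓝 (w 0)) := by
  have hs1 : Summable a := by simpa using hs 1 one_pos
  have hA := tendsto_tsum_mul_pow_nhds_zero (summable_abs_iff.2 hs1)
  have hB := tendsto_tsum_mul_pow_nhds_zero
    (summable_abs_iff.2 (by simpa using summable_mul_mul_pow ha hw hanti one_pos (hs 1 one_pos)))
  rw [← mul_div_cancel_left₀ (w 0) (ha 0).ne']
  exact (hB.div hA (ha 0).ne').mono_left nhdsWithin_le_nhds

theorem tsum_mul_mul_pow_le (ha : ∀ n, 0 < a n) (hw : ∀ n, 0 < w n) (hanti : Antitone w)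
    {y δ : ℝ} (hy : 0 < y) (hs : Summable fun n => a n * y ^ n) {N : ℕ}
    (hN : ∀ n ≥ N, w n ≤ δ) :
    ∑' n, a n * w n * y ^ n ≤
      w 0 * ∑ n ∈ Finset.range N, a n * y ^ n + δ * ∑' n, a n * y ^ n := by
  have hterm : ∀ n, 0 ≤ a n * y ^ n := fun n => (mul_pos (ha n) (pow_pos hy n)).le
  have hT := summable_mul_mul_pow ha hw hanti hy hs
  have hhead : ∑ n ∈ Finset.range N, a n * w n * y ^ n ≤
      w 0 * ∑ n ∈ Finset.range N, a n * y ^ n := by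
    rw [Finset.mul_sum]
    refine Finset.sum_le_sum fun n _ => ?_
    nlinarith [hanti (Nat.zero_le n), hterm n]
  have htail : ∑' n, a (n + N) * w (n + N) * y ^ (n + N) ≤ δ * ∑' n, a n * y ^ n := by
    calc ∑' n, a (n + N) * w (n + N) * y ^ (n + N) ≤ ∑' n, δ * (a (n + N) * y ^ (n + N)) :=
          ((summable_nat_add_iff N).2 hT).tsum_le_tsum
            (fun n => by nlinarith [hN (n + N) (Nat.le_add_left N n), hterm (n + N)])
            (((summable_nat_add_iff N).2 hs).mul_left δ)
      _ ≤ δ * ∑' n, a n * y ^ n := by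
          rw [tsum_mul_left, ← hs.sum_add_tsum_nat_add N]
          have := Finset.sum_nonneg fun n (_ : n ∈ Finset.range N) => hterm n
          have : 0 ≤ δ := (hw N).le.trans (hN N le_rfl)
          nlinarith
  rw [← hT.sum_add_tsum_nat_add N]
  linarith

theorem tendsto_seriesMean_atTop (ha : ∀ n, 0 < a n) (hw : ∀ n, 0 < w n) (hanti : Antitone w)
    (hlim : Tendsto w atTop (𝓝 0)) (hs : ∀ y, 0 < y → Summable fun n => a n * y ^ n) :
    Tendsto (seriesMean a w) atTop (𝓝 0) := by
  refine tendsto_order.2 ⟨fun b hb => ?_, fun ε hε => ?_⟩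
  · filter_upwards [eventually_gt_atTop 0] with y hy
    exact hb.trans (seriesMean_pos ha hw hanti hy (hs y hy))
  -- Beyond `N` the weights are below `ε / 2`; the first `N` terms form a polynomial of degree
  -- `< N`, negligible against `a N * y ^ N`.
  obtain ⟨N, hN⟩ := eventually_atTop.1 (hlim.eventually (ge_mem_nhds (half_pos hε)))
  have hhead : (fun y => ∑ n ∈ Finset.range N, a n * y ^ n) =o[atTop] fun y => y ^ N := by
    simpa only [← Finset.sum_fn] using IsLittleO.sum fun n hn =>
      (isLittleO_pow_pow_atTop_of_lt (Finset.mem_range.1 hn)).const_mul_left (a n)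
  have hc : 0 < ε * a N / (4 * w 0) := by have := ha N; have := hw 0; positivity
  filter_upwards [hhead.def hc, eventually_gt_atTop 0] with y hH hy
  have hS : 0 < ∑' n, a n * y ^ n :=
    (hs y hy).tsum_pos (fun n => (mul_pos (ha n) (pow_pos hy n)).le) 0 (by simp [ha 0])
  have hN_le : a N * y ^ N ≤ ∑' n, a n * y ^ n :=
    (hs y hy).le_tsum N fun n _ => (mul_pos (ha n) (pow_pos hy n)).le
  rw [Real.norm_of_nonneg (pow_pos hy N).le] at hH
  have hw0H : w 0 * ∑ n ∈ Finset.range N, a n * y ^ n ≤ ε / 4 * ∑' n, a n * y ^ n := by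
    calc w 0 * ∑ n ∈ Finset.range N, a n * y ^ n
        ≤ w 0 * (ε * a N / (4 * w 0) * y ^ N) :=
          mul_le_mul_of_nonneg_left ((le_abs_self _).trans hH) (hw 0).le
      _ = ε / 4 * (a N * y ^ N) := by field_simp [(hw 0).ne']
      _ ≤ ε / 4 * ∑' n, a n * y ^ n := by gcongr
  rw [seriesMean, div_lt_iff₀ hS]
  have := tsum_mul_mul_pow_le ha hw hanti hy (hs y hy) hN
  nlinarith [mul_pos hε hS]

end SeriesMean

theorem forall_lt_and_lt_iff_of_tendsto {R : ℝ → ℝ} {a b p q : ℝ}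
    (hR : ∀ y, 0 < y → a < R y ∧ R y < b)
    (h0 : Tendsto R (𝓝[>] 0) (𝓝 b)) (htop : Tendsto R atTop (𝓝 a)) :
    (∀ y, 0 < y → R y < p ∧ q < R y) ↔ b ≤ p ∧ q ≤ a := by
  refine ⟨fun h => ⟨?_, ?_⟩, fun ⟨hp, hq⟩ y hy =>
    ⟨(hR y hy).2.trans_le hp, hq.trans_lt (hR y hy).1⟩⟩
  · by_contra! hp
    obtain ⟨y, hpy, hy⟩ := ((h0.eventually (lt_mem_nhds hp)).and self_mem_nhdsWithin).exists
    exact (h y hy).1.not_gt hpy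
  · by_contra! hq
    obtain ⟨y, hqy, hy⟩ := ((htop.eventually (gt_mem_nhds hq)).and (eventually_gt_atTop 0)).exists
    exact (h y hy).2.not_gt hqy

theorem forall_pos_sq_div_four_iff {P : ℝ → Prop} :
    (∀ x, 0 < x → P (x ^ 2 / 4)) ↔ ∀ y, 0 < y → P y := by
  refine ⟨fun h y hy => ?_, fun h x hx => h _ (by positivity)⟩
  have := h (2 * √y) (by positivity)
  rwa [mul_pow, Real.sq_sqrt hy.le, show (2 : ℝ) ^ 2 = 4 by norm_num,
    mul_div_cancel_left₀ _ four_ne_zero] at this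

theorem huygens_gt_one_iff {I J r : ℝ} (hI : 1 < I) (hJ : 0 < J) :
    (1 - r) / J + r * I / J > 1 ↔ (J - 1) / (I - 1) < r := by
  rw [← add_div, gt_iff_lt, one_lt_div hJ, div_lt_iff₀ (by linarith)]
  constructor <;> intro h <;> linarith

theorem huygens_lt_one_iff {I J r : ℝ} (hI : 1 < I) (hJ : 0 < J) :
    1 > (1 - r) / J + r * I / J ↔ r < (J - 1) / (I - 1) := by
  rw [← add_div, gt_iff_lt, div_lt_one hJ, lt_div_iff₀ (by linarith)]
  constructor <;> intro h <;> linarith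

noncomputable def besselCoeff (ν : ℝ) (n : ℕ) : ℝ :=
  Real.Gamma (ν + 1) / (Real.Gamma (ν + n + 1) * n.factorial)

noncomputable def besselWeight (ν : ℝ) (n : ℕ) : ℝ := (ν + 1) / (ν + n + 2)

theorem besselIn_eq_tsum (ν x : ℝ) :
    besselIn ν x = ∑' n, besselCoeff ν n * (x ^ 2 / 4) ^ n := by
  refine tsum_congr fun n => ?_
  simp only [besselCoeff, div_pow, pow_mul, one_pow]
  ring

section Coefficients

variable {ν : ℝ}

theorem add_natCast_add_one_pos (hν : -1 < ν) (n : ℕ) : 0 < ν + n + 1 := by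
  have : (0 : ℝ) ≤ n := n.cast_nonneg
  linarith

theorem besselCoeff_pos (hν : -1 < ν) (n : ℕ) : 0 < besselCoeff ν n :=
  div_pos (Real.Gamma_pos_of_pos (by linarith))
    (mul_pos (Real.Gamma_pos_of_pos (add_natCast_add_one_pos hν n))
      (Nat.cast_pos.2 n.factorial_pos))

theorem besselCoeff_zero (hν : -1 < ν) : besselCoeff ν 0 = 1 := by
  simp [besselCoeff, (Real.Gamma_pos_of_pos (by linarith : 0 < ν + 1)).ne']

theorem besselCoeff_succ (hν : -1 < ν) (n : ℕ) :
    besselCoeff ν (n + 1) = besselCoeff ν n / ((ν + n + 1) * (n + 1)) := by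
  have hn := add_natCast_add_one_pos hν n
  have hG : Real.Gamma (ν + ↑(n + 1) + 1) = (ν + n + 1) * Real.Gamma (ν + n + 1) := by
    rw [Nat.cast_succ, ← Real.Gamma_add_one hn.ne']; ring_nf
  have := Real.Gamma_pos_of_pos hn
  rw [besselCoeff, besselCoeff, hG, Nat.factorial_succ, Nat.cast_mul, Nat.cast_succ]
  field_simp

theorem besselCoeff_add_one (hν : -1 < ν) (n : ℕ) :
    besselCoeff (ν + 1) n = besselCoeff ν n * ((ν + 1) / (ν + n + 1)) := by
  have hn := add_natCast_add_one_pos hν n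
  have hG₁ := Real.Gamma_add_one (by linarith : ν + 1 ≠ 0)
  have hG₂ : Real.Gamma (ν + 1 + n + 1) = (ν + n + 1) * Real.Gamma (ν + n + 1) := by
    rw [← Real.Gamma_add_one hn.ne']; ring_nf
  have := Real.Gamma_pos_of_pos hn
  have := Real.Gamma_pos_of_pos (by linarith : 0 < ν + 1)
  rw [besselCoeff, besselCoeff, hG₁, hG₂]
  field_simp

theorem besselCoeff_add_one_succ (hν : -1 < ν) (n : ℕ) :
    besselCoeff (ν + 1) (n + 1) = besselCoeff ν (n + 1) * besselWeight ν n := by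
  rw [besselCoeff_add_one hν, besselWeight, Nat.cast_succ]
  ring_nf

theorem summable_besselCoeff_mul_pow (hν : -1 < ν) {y : ℝ} (hy : 0 < y) :
    Summable fun n => besselCoeff ν n * y ^ n := by
  have hpos : ∀ n, 0 < besselCoeff ν n * y ^ n := fun n =>
    mul_pos (besselCoeff_pos hν n) (pow_pos hy n)
  refine summable_of_ratio_test_tendsto_lt_one zero_lt_one
    (Eventually.of_forall fun n => (hpos n).ne') ?_
  have hratio : ∀ n : ℕ, ‖besselCoeff ν (n + 1) * y ^ (n + 1)‖ / ‖besselCoeff ν n * y ^ n‖ =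
      y / ((ν + n + 1) * (n + 1)) := fun n => by
    have := besselCoeff_pos hν n
    have := add_natCast_add_one_pos hν n
    rw [Real.norm_of_nonneg (hpos _).le, Real.norm_of_nonneg (hpos _).le, besselCoeff_succ hν]
    field_simp
    ring
  simp only [hratio]
  refine tendsto_const_nhds.div_atTop
    (tendsto_atTop_mono (fun n => ?_) tendsto_natCast_atTop_atTop)
  nlinarith [(Nat.cast_nonneg n : (0 : ℝ) ≤ n)]

theorem summable_besselCoeff_succ_mul_pow (hν : -1 < ν) {y : ℝ} (hy : 0 < y) :
    Summable fun n => besselCoeff ν (n + 1) * y ^ n := by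
  refine (((summable_nat_add_iff 1).2 (summable_besselCoeff_mul_pow hν hy)).div_const y).congr
    fun n => ?_
  rw [pow_succ, ← mul_assoc, mul_div_cancel_right₀ _ hy.ne']

theorem besselIn_eq_one_add (hν : -1 < ν) {x : ℝ} (hx : 0 < x) :
    besselIn ν x = 1 + x ^ 2 / 4 * ∑' n, besselCoeff ν (n + 1) * (x ^ 2 / 4) ^ n := by
  rw [besselIn_eq_tsum, (summable_besselCoeff_mul_pow hν (by positivity)).tsum_eq_zero_add,
    besselCoeff_zero hν, ← tsum_mul_left]
  simp only [pow_zero, mul_one, pow_succ]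
  congr 1
  exact tsum_congr fun n => by ring

theorem one_lt_besselIn (hν : -1 < ν) {x : ℝ} (hx : 0 < x) : 1 < besselIn ν x := by
  have hy : 0 < x ^ 2 / 4 := by positivity
  have := (summable_besselCoeff_succ_mul_pow hν hy).tsum_pos
    (fun n => (mul_pos (besselCoeff_pos hν _) (pow_pos hy n)).le) 0
    (mul_pos (besselCoeff_pos hν _) (pow_pos hy 0))
  rw [besselIn_eq_one_add hν hx]
  nlinarith

theorem besselWeight_pos (hν : -1 < ν) (n : ℕ) : 0 < besselWeight ν n :=
  div_pos (by linarith) (by linarith [add_natCast_add_one_pos hν n])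

theorem besselWeight_strictAnti (hν : -1 < ν) : StrictAnti (besselWeight ν) := fun m n hmn =>
  div_lt_div_of_pos_left (by linarith) (by linarith [add_natCast_add_one_pos hν m])
    (by linarith [(Nat.cast_lt (α := ℝ)).2 hmn])

theorem besselWeight_zero (ν : ℝ) : besselWeight ν 0 = (ν + 1) / (ν + 2) := by
  simp [besselWeight]

theorem tendsto_besselWeight_atTop (ν : ℝ) : Tendsto (besselWeight ν) atTop (𝓝 0) :=
  tendsto_const_nhds.div_atTop <| tendsto_atTop_add_const_right _ 2 <|
    tendsto_atTop_add_const_left _ ν tendsto_natCast_atTop_atTop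

end Coefficients

noncomputable def besselRatio (ν : ℝ) : ℝ → ℝ :=
  seriesMean (fun n => besselCoeff ν (n + 1)) (besselWeight ν)

theorem besselRatio_sq_div_four {ν x : ℝ} (hν : -1 < ν) (hx : 0 < x) :
    besselRatio ν (x ^ 2 / 4) = (besselIn (ν + 1) x - 1) / (besselIn ν x - 1) := by
  have hy : 0 < x ^ 2 / 4 := by positivity
  rw [besselIn_eq_one_add hν hx, besselIn_eq_one_add (by linarith) hx, add_sub_cancel_left,
    add_sub_cancel_left, mul_div_mul_left _ _ hy.ne', besselRatio, seriesMean]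
  simp_rw [besselCoeff_add_one_succ hν]

theorem besselI_huygens_reciprocal_iff (ν p q : ℝ) (hν : -1 < ν) :
    (∀ x : ℝ, 0 < x →
      (1 - p) / besselIn (ν + 1) x + p * besselIn ν x / besselIn (ν + 1) x > 1 ∧
      1 > (1 - q) / besselIn (ν + 1) x + q * besselIn ν x / besselIn (ν + 1) x) ↔
    (p ≥ (ν + 1) / (ν + 2) ∧ q ≤ 0) := by
  have ha n := besselCoeff_pos hν (n + 1)
  have hw := besselWeight_pos hν
  have hanti := besselWeight_strictAnti hν
  have hs y (hy : 0 < y) := summable_besselCoeff_succ_mul_pow hν (y := y) hy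
  have hrange y (hy : 0 < y) : 0 < besselRatio ν y ∧ besselRatio ν y < (ν + 1) / (ν + 2) :=
    ⟨seriesMean_pos ha hw hanti.antitone hy (hs y hy),
      besselWeight_zero ν ▸ seriesMean_lt ha hw hanti hy (hs y hy)⟩
  have h0 : Tendsto (besselRatio ν) (𝓝[>] 0) (𝓝 ((ν + 1) / (ν + 2))) :=
    besselWeight_zero ν ▸ tendsto_seriesMean_nhdsGT_zero ha hw hanti.antitone hs
  have htop := tendsto_seriesMean_atTop ha hw hanti.antitone (tendsto_besselWeight_atTop ν) hs
  rw [ge_iff_le, ← forall_lt_and_lt_iff_of_tendsto hrange h0 htop]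
  refine Iff.trans (forall₂_congr fun x hx => ?_) forall_pos_sq_div_four_iff
  have hI := one_lt_besselIn hν hx
  have hJ := one_lt_besselIn (by linarith : -1 < ν + 1) hx
  rw [besselRatio_sq_div_four hν hx]
  exact and_congr (huygens_gt_one_iff hI (by linarith)) (huygens_lt_one_iff hI (by linarith))
end
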